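/- arXiv:2508.01834 — 2 statements merged into one kernel-verified Lean document; each statement's English description precedes it below -/
import Mathlib

section
/- Let d ≥ 1, fix l ∈ {1, …, d}, let L_j < U_j, a_j ∈ ℝ, θ_j > 0 and w_j ≥ 0 for each j, and fix x_l ∈ ℝ. Then ∫_{∏_{j ≠ l} [L_j, U_j]} ∑_{k=1}^d w_k exp(−(x_k − a_k)²/θ_k²) dx_{−l} = w_l exp(−(x_l − a_l)²/θ_l²) · ∏_{j ≠ l} (U_j − L_j) + √π · ∑_{k ≠ l} w_k θ_k (Φ_k(U_k) − Φ_k(L_k)) · ∏_{j ≠ l, j ≠ k} (U_j − L_j), where Φ_k denotes the cumulative distribution function of the Gaussian distribution with mean a_k and variance θ_k²/2, and the integral is with respect to Lebesgue measure on ∏_{j ≠ l} [L_j, U_j]. -/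
/-!
Integrate the kernel term by term. The `l`-th term is constant on the box. For `k ≠ l` the term
depends on `y_k` alone, and the push-forward of a product measure under a coordinate projection
is that factor scaled by the masses of the others, so the term is its one-dimensional integral
over `[L_k, U_k]` times `∏_{j ≠ l, k} (U_j - L_j)`. That integral is
`√π θ_k (Φ_k(U_k) - Φ_k(L_k))`, since `exp (-(x - a)² / θ²)` is `√π θ` times the density of the
Gaussian with mean `a` and variance `θ² / 2`.
-/

open MeasureTheory

noncomputable def gaussCDF (a s t : ℝ) : ℝ :=
  ∫ x in Set.Iic t, (Real.sqrt (2 * Real.pi * s))⁻¹ * Real.exp (-(x - a) ^ 2 / (2 * s))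

open Set Finset

section Reindex

variable {α M : Type*} [Fintype α] [DecidableEq α] [CommMonoid M]

theorem Finset.prod_subtype_ne_eq_prod_erase (l : α) (f : α → M) :
    ∏ j : {j // j ≠ l}, f j = ∏ j ∈ univ.erase l, f j :=
  (prod_subtype _ (by simp) f).symm

theorem Finset.prod_erase_subtype_ne {l k : α} (hk : k ≠ l) (f : α → M) :
    ∏ j ∈ univ.erase (⟨k, hk⟩ : {j // j ≠ l}), f j = ∏ j ∈ (univ.erase l).erase k, f j := by
  refine (prod_map _ (Function.Embedding.subtype _) f).symm.trans ?_
  congr 1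
  ext j
  simp [and_comm]

end Reindex

theorem volume_real_univ_pi_Icc {ι : Type*} [Fintype ι] {L U : ι → ℝ} (hLU : L ≤ U) :
    volume.real (univ.pi fun j => Icc (L j) (U j)) = ∏ j, (U j - L j) := by
  rw [pi_univ_Icc, measureReal_def, Real.volume_Icc_pi_toReal hLU]

section Marginal

variable {ι E : Type*} [Fintype ι] [DecidableEq ι] [NormedAddCommGroup E] [NormedSpace ℝ E]

theorem integral_comp_eval_pi {α : ι → Type*} [∀ i, MeasurableSpace (α i)]
    (μ : ∀ i, Measure (α i)) [∀ i, SigmaFinite (μ i)] (i : ι) {f : α i → E}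
    (hf : AEStronglyMeasurable f (μ i)) :
    ∫ x, f (x i) ∂Measure.pi μ = (∏ j ∈ univ.erase i, (μ j).real univ) • ∫ x, f x ∂μ i := by
  rw [← integral_map (measurable_pi_apply i).aemeasurable, Measure.pi_map_eval,
    integral_smul_measure, ENNReal.toReal_prod]
  · rfl
  · rw [Measure.pi_map_eval]
    exact hf.smul_measure _

theorem setIntegral_univ_pi_Icc_comp_eval {L U : ι → ℝ} (hLU : L ≤ U) (i : ι) {f : ℝ → E}
    (hf : AEStronglyMeasurable f (volume.restrict (Icc (L i) (U i)))) :
    ∫ y in univ.pi (fun j => Icc (L j) (U j)), f (y i)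
      = (∏ j ∈ univ.erase i, (U j - L j)) • ∫ x in Icc (L i) (U i), f x := by
  rw [volume_pi, Measure.restrict_pi_pi, integral_comp_eval_pi _ i hf]
  simp_rw [measureReal_restrict_apply_univ, Real.volume_real_Icc_of_le (hLU _)]

end Marginal

section Gaussian

theorem integrable_exp_neg_sub_sq_div_sq (a : ℝ) {θ : ℝ} (hθ : θ ≠ 0) :
    Integrable fun x => Real.exp (-(x - a) ^ 2 / θ ^ 2) := by
  have := (integrable_exp_neg_mul_sq (b := (θ ^ 2)⁻¹) (by positivity)).comp_sub_right a
  convert this using 3 with x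
  ring

theorem gaussCDF_half_sq (a t : ℝ) {θ : ℝ} (hθ : 0 < θ) :
    gaussCDF a (θ ^ 2 / 2) t
      = (Real.sqrt Real.pi * θ)⁻¹ * ∫ x in Iic t, Real.exp (-(x - a) ^ 2 / θ ^ 2) := by
  have hnorm : Real.sqrt (2 * Real.pi * (θ ^ 2 / 2)) = Real.sqrt Real.pi * θ := by
    rw [show 2 * Real.pi * (θ ^ 2 / 2) = Real.pi * θ ^ 2 by ring,
      Real.sqrt_mul Real.pi_pos.le, Real.sqrt_sq hθ.le]
  rw [gaussCDF, hnorm, ← integral_const_mul]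
  congr! 4
  ring

theorem setIntegral_Icc_exp_neg_sub_sq_div_sq (a : ℝ) {θ L U : ℝ} (hθ : 0 < θ) (hLU : L ≤ U) :
    ∫ x in Icc L U, Real.exp (-(x - a) ^ 2 / θ ^ 2)
      = Real.sqrt Real.pi * θ * (gaussCDF a (θ ^ 2 / 2) U - gaussCDF a (θ ^ 2 / 2) L) := by
  have hint := integrable_exp_neg_sub_sq_div_sq a hθ.ne'
  rw [gaussCDF_half_sq a U hθ, gaussCDF_half_sq a L hθ, ← mul_sub, ← mul_assoc,
    mul_inv_cancel₀ (by positivity), one_mul, intervalIntegral.integral_Iic_sub_Iic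
      hint.integrableOn hint.integrableOn, intervalIntegral.integral_of_le hLU,
    integral_Icc_eq_integral_Ioc]

end Gaussian

theorem stmt10_general (d : ℕ) (l : Fin d) (L U a θ w : Fin d → ℝ)
    (hLU : ∀ j, L j < U j) (hθ : ∀ j, 0 < θ j) (xl : ℝ) :
    (∫ y in Set.univ.pi (fun j : {j : Fin d // j ≠ l} => Set.Icc (L j.1) (U j.1)),
        ∑ k : Fin d,
          w k * Real.exp (-(((fun i => if hi : i = l then xl else y ⟨i, hi⟩) k) - a k) ^ 2
            / (θ k) ^ 2))
      = w l * Real.exp (-(xl - a l) ^ 2 / (θ l) ^ 2) *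
            (∏ j ∈ Finset.univ.erase l, (U j - L j))
        + Real.sqrt Real.pi *
            ∑ k ∈ Finset.univ.erase l,
              w k * θ k * (gaussCDF (a k) ((θ k) ^ 2 / 2) (U k)
                  - gaussCDF (a k) ((θ k) ^ 2 / 2) (L k)) *
                ∏ j ∈ (Finset.univ.erase l).erase k, (U j - L j) := by
  have hLU' : (fun j : {j : Fin d // j ≠ l} => L j) ≤ fun j => U j.1 := fun j => (hLU j).le
  have hint (k : Fin d) : IntegrableOn (fun y : {j : Fin d // j ≠ l} → ℝ =>
      w k * Real.exp (-((if hi : k = l then xl else y ⟨k, hi⟩) - a k) ^ 2 / θ k ^ 2))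
      (univ.pi fun j => Icc (L j.1) (U j.1)) :=
    ContinuousOn.integrableOn_compact (isCompact_univ_pi fun _ => isCompact_Icc)
      (by split_ifs <;> fun_prop)
  rw [integral_finsetSum _ fun k _ => hint k, ← add_sum_erase _ _ (mem_univ l), mul_sum]
  congr 1
  · simp only [↓reduceDIte]
    rw [setIntegral_const, volume_real_univ_pi_Icc hLU',
      prod_subtype_ne_eq_prod_erase l (fun j => U j - L j), smul_eq_mul, mul_comm]
  · refine sum_congr rfl fun k hk => ?_
    have hkl := ne_of_mem_erase hk
    simp only [dif_neg hkl]
    refine (setIntegral_univ_pi_Icc_comp_eval hLU' ⟨k, hkl⟩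
      (f := fun x => w k * Real.exp (-(x - a k) ^ 2 / θ k ^ 2)) (by fun_prop)).trans ?_
    rw [integral_const_mul, setIntegral_Icc_exp_neg_sub_sq_div_sq _ (hθ k) (hLU k).le,
      prod_erase_subtype_ne hkl (fun j => U j - L j), smul_eq_mul]
    ring

/-- Marginalizing the additive squared-exponential kernel
`∑_k w_k exp(-(x_k - a_k)²/θ_k²)` over all coordinates except the `l`-th, over the rectangle
`∏_{j≠l} [L_j, U_j]`, gives
`w_l exp(-(x_l-a_l)²/θ_l²) ∏_{j≠l}(U_j-L_j)
 + √π ∑_{k≠l} w_k θ_k (Φ_k(U_k) - Φ_k(L_k)) ∏_{j≠l,j≠k}(U_j-L_j)`,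
where `Φ_k` is the CDF of the Gaussian with mean `a_k` and variance `θ_k²/2`. -/
theorem stmt10 (d : ℕ) (hd : 1 ≤ d) (l : Fin d) (L U a θ w : Fin d → ℝ)
    (hLU : ∀ j, L j < U j) (hθ : ∀ j, 0 < θ j) (hw : ∀ j, 0 ≤ w j) (xl : ℝ) :
    (∫ y in Set.univ.pi (fun j : {j : Fin d // j ≠ l} => Set.Icc (L j.1) (U j.1)),
        ∑ k : Fin d,
          w k * Real.exp (-(((fun i => if hi : i = l then xl else y ⟨i, hi⟩) k) - a k) ^ 2
            / (θ k) ^ 2))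
      = w l * Real.exp (-(xl - a l) ^ 2 / (θ l) ^ 2) *
            (∏ j ∈ Finset.univ.erase l, (U j - L j))
        + Real.sqrt Real.pi *
            ∑ k ∈ Finset.univ.erase l,
              w k * θ k * (gaussCDF (a k) ((θ k) ^ 2 / 2) (U k)
                  - gaussCDF (a k) ((θ k) ^ 2 / 2) (L k)) *
                ∏ j ∈ (Finset.univ.erase l).erase k, (U j - L j) :=
  stmt10_general d l L U a θ w hLU hθ xl
end

section
/- Let d ≥ 1 and X = ∏_{l=1}^d [L_l, U_l] ⊂ ℝ^d with L_l < U_l. Let h : X → ℝ be continuous with a unique minimizer x* = (x*_1, …, x*_d) ∈ X, and suppose h satisfies the first-order dominating condition: the set of minimizers of h over X equals the set of minimizers over X of x ↦ ∑_{l=1}^d m_l(x_l), where m_l(x_l) = ∫_{X_{−l}} h(x) dx_{−l}. Let φ : ℝ → ℝ be continuous and strictly monotone increasing, and set f = φ ∘ h. Let (g_n) be a sequence of continuous functions g_n : X → ℝ with sup_{x ∈ X} |h(x) − g_n(x)| → 0 as n → ∞, and for each n let x̂_n = (x̂_{n,1}, …, x̂_{n,d}) where x̂_{n,l} is any minimizer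 over [L_l, U_l] of the marginal mean x_l ↦ ∫_{X_{−l}} g_n(x) dx_{−l}. Then x̂_n → x*, h(x̂_n) → h(x*), and f(x̂_n) → f(x*). -/
/-!
Because of the first-order dominating condition, `x*` is also the unique minimizer of the
separable function `x ↦ ∑ l, m_l (x_l)`, so each coordinate `x*_l` is the unique minimizer of the
continuous marginal mean `m_l` on `[L_l, U_l]`. The marginal means of `g n` are within
`ε n · vol(X_{-l})` of `m_l`, so their minimizers `x̂_{n,l}` are `2 ε n · vol(X_{-l})`-minimizers
of `m_l`; on a compact set, approximate minimizers of a continuous function with a unique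
minimizer converge to it. Continuity of `h` and `φ` gives the remaining two limits.
-/

open MeasureTheory

/-- The rectangle `∏_{l} [L l, U l] ⊂ ℝ^d`. -/
def rect {d : ℕ} (L U : Fin d → ℝ) : Set (Fin d → ℝ) :=
  Set.univ.pi fun l => Set.Icc (L l) (U l)

/-- The `l`-th marginal mean function of `h : ℝ^d → ℝ` over the rectangle `∏ [L j, U j]`. -/
noncomputable def marginalMean {d : ℕ} (L U : Fin d → ℝ)
    (h : (Fin d → ℝ) → ℝ) (l : Fin d) (t : ℝ) : ℝ :=
  ∫ y in Set.univ.pi (fun j : {j : Fin d // j ≠ l} => Set.Icc (L j.1) (U j.1)),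
    h (fun i => if hi : i = l then t else y ⟨i, hi⟩)

open Filter Topology Set

section ArgminConsistency

variable {X ι : Type*} [TopologicalSpace X] {K : Set X} {F : X → ℝ} {a : X} {l : Filter ι}

theorem IsCompact.tendsto_of_tendsto_apply_of_unique_min (hK : IsCompact K)
    (hF : ContinuousOn F K) (huniq : ∀ x ∈ K, x ≠ a → F a < F x) {u : ι → X}
    (hu : ∀ᶠ n in l, u n ∈ K) (hFu : Tendsto (F ∘ u) l (𝓝 (F a))) :
    Tendsto u l (𝓝 a) := by
  refine tendsto_nhds.2 fun W hW haW => ?_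
  rcases (K \ W).eq_empty_or_nonempty with hempty | hne
  · filter_upwards [hu] with n hn
    by_contra hnW
    exact hempty.subset ⟨hn, hnW⟩
  · obtain ⟨t, ht, htmin⟩ := (hK.diff hW).exists_isMinOn hne (hF.mono sdiff_subset)
    have hlt : F a < F t := huniq t ht.1 fun hta => ht.2 (hta ▸ haW)
    filter_upwards [hu, hFu.eventually (gt_mem_nhds hlt)] with n hn hFn
    by_contra hnW
    exact (isMinOn_iff.1 htmin _ ⟨hn, hnW⟩).not_gt hFn

theorem IsCompact.tendsto_of_isMinOn_of_abs_sub_le (hK : IsCompact K)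
    (hF : ContinuousOn F K) (huniq : ∀ x ∈ K, x ≠ a → F a < F x) (ha : a ∈ K)
    {G : ι → X → ℝ} {e : ι → ℝ} (hGF : ∀ n, ∀ x ∈ K, |F x - G n x| ≤ e n)
    (he : Tendsto e l (𝓝 0)) {u : ι → X} (hu : ∀ n, u n ∈ K) (hmin : ∀ n, IsMinOn (G n) K (u n)) :
    Tendsto u l (𝓝 a) := by
  refine hK.tendsto_of_tendsto_apply_of_unique_min hF huniq (.of_forall hu) ?_
  have hlower : ∀ n, F a ≤ F (u n) := fun n => by
    rcases eq_or_ne (u n) a with hua | hua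
    · rw [hua]
    · exact (huniq _ (hu n) hua).le
  have hupper : ∀ n, F (u n) ≤ F a + 2 * e n := fun n => by
    have hun := abs_sub_le_iff.1 (hGF n _ (hu n))
    have han := abs_sub_le_iff.1 (hGF n a ha)
    have := isMinOn_iff.1 (hmin n) a ha
    linarith
  refine tendsto_of_tendsto_of_tendsto_of_le_of_le tendsto_const_nhds ?_ hlower hupper
  simpa using (he.const_mul 2).const_add (F a)

end ArgminConsistency

theorem lt_apply_of_unique_min_sum {ι : Type*} [Fintype ι] [DecidableEq ι] {β : ι → Type*}
    {s : ∀ i, Set (β i)} {m : ∀ i, β i → ℝ} {x : ∀ i, β i} (hx : x ∈ univ.pi s)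
    (hmin : ∀ y ∈ univ.pi s, ∑ i, m i (x i) ≤ ∑ i, m i (y i))
    (huniq : ∀ y ∈ univ.pi s, (∀ z ∈ univ.pi s, ∑ i, m i (y i) ≤ ∑ i, m i (z i)) → y = x)
    (i : ι) {t : β i} (ht : t ∈ s i) (hne : t ≠ x i) : m i (x i) < m i t := by
  set y := Function.update x i t
  have hy : y ∈ univ.pi s := (update_mem_pi_iff_of_mem hx).2 fun _ => ht
  have hsum : ∑ j, m j (y j) = ∑ j, m j (x j) - m i (x i) + m i t := by
    simp only [y, Function.apply_update (fun j => m j),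
      Finset.sum_update_of_mem (Finset.mem_univ i), ← Finset.add_sum_erase _ _ (Finset.mem_univ i),
      Finset.sdiff_singleton_eq_erase]
    ring
  refine lt_of_le_of_ne (by linarith [hmin y hy]) fun heq => hne ?_
  have hyx : y = x := huniq y hy fun z hz => by linarith [hmin z hz]
  simpa [y] using congrFun hyx i

section MarginalMean

variable {d : ℕ} (L U : Fin d → ℝ)

def insertAt (l : Fin d) (t : ℝ) (y : {j : Fin d // j ≠ l} → ℝ) : Fin d → ℝ :=
  fun i => if hi : i = l then t else y ⟨i, hi⟩

/-- The rectangle `X_{-l}`. -/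
def rectCompl (l : Fin d) : Set ({j : Fin d // j ≠ l} → ℝ) :=
  univ.pi fun j => Icc (L j.1) (U j.1)

theorem marginalMean_eq (h : (Fin d → ℝ) → ℝ) (l : Fin d) (t : ℝ) :
    marginalMean L U h l t = ∫ y in rectCompl L U l, h (insertAt l t y) := rfl

theorem insertAt_mem_rect {l : Fin d} {t : ℝ} {y : {j : Fin d // j ≠ l} → ℝ}
    (ht : t ∈ Icc (L l) (U l)) (hy : y ∈ rectCompl L U l) : insertAt l t y ∈ rect L U := by
  intro i _
  by_cases hi : i = l
  · subst hi
    simpa [insertAt] using ht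
  · simpa [insertAt, hi] using hy ⟨i, hi⟩ (mem_univ _)

theorem continuous_insertAt_left (l : Fin d) (y : {j : Fin d // j ≠ l} → ℝ) :
    Continuous fun t => insertAt l t y :=
  continuous_pi fun i => by by_cases hi : i = l <;> simp [insertAt, hi] <;> fun_prop

theorem continuous_insertAt_right (l : Fin d) (t : ℝ) : Continuous (insertAt l t) :=
  continuous_pi fun i => by by_cases hi : i = l <;> simp [insertAt, hi] <;> fun_prop

theorem measurableSet_rectCompl (l : Fin d) : MeasurableSet (rectCompl L U l) :=
  .univ_pi fun _ => measurableSet_Icc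

theorem isCompact_rectCompl (l : Fin d) : IsCompact (rectCompl L U l) :=
  isCompact_univ_pi fun _ => isCompact_Icc

theorem volume_rectCompl_lt_top (l : Fin d) : volume (rectCompl L U l) < ⊤ := by
  rw [rectCompl, volume_pi_pi]
  exact ENNReal.prod_lt_top fun _ _ => measure_Icc_lt_top

variable {L U}

theorem ContinuousOn.insertAt_right {h : (Fin d → ℝ) → ℝ} (hh : ContinuousOn h (rect L U))
    {l : Fin d} {t : ℝ} (ht : t ∈ Icc (L l) (U l)) :
    ContinuousOn (fun y => h (insertAt l t y)) (rectCompl L U l) :=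
  hh.comp (continuous_insertAt_right l t).continuousOn fun _ hy => insertAt_mem_rect L U ht hy

theorem continuousOn_marginalMean {h : (Fin d → ℝ) → ℝ} (hh : ContinuousOn h (rect L U))
    (l : Fin d) : ContinuousOn (marginalMean L U h l) (Icc (L l) (U l)) := by
  obtain ⟨C, hC⟩ := (isCompact_univ_pi fun _ => isCompact_Icc).exists_bound_of_continuousOn hh
  refine continuousOn_of_dominated (bound := fun _ => C)
    (fun t ht => (hh.insertAt_right ht).aestronglyMeasurable (measurableSet_rectCompl L U l))
    (fun t ht => ?_) (integrableOn_const (volume_rectCompl_lt_top L U l).ne) ?_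
  · filter_upwards [ae_restrict_mem (measurableSet_rectCompl L U l)] with y hy
    exact hC _ (insertAt_mem_rect L U ht hy)
  · filter_upwards [ae_restrict_mem (measurableSet_rectCompl L U l)] with y hy
    exact hh.comp (continuous_insertAt_left l y).continuousOn
      fun _ ht => insertAt_mem_rect L U ht hy

theorem abs_marginalMean_sub_le {h g : (Fin d → ℝ) → ℝ} (hh : ContinuousOn h (rect L U))
    (hg : ContinuousOn g (rect L U)) {e : ℝ} (hhg : ∀ x ∈ rect L U, |h x - g x| ≤ e)
    {l : Fin d} {t : ℝ} (ht : t ∈ Icc (L l) (U l)) :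
    |marginalMean L U h l t - marginalMean L U g l t| ≤
      e * (volume (rectCompl L U l)).toReal := by
  rw [marginalMean_eq, marginalMean_eq, ← integral_sub
    ((hh.insertAt_right ht).integrableOn_compact (isCompact_rectCompl L U l))
    ((hg.insertAt_right ht).integrableOn_compact (isCompact_rectCompl L U l)),
    ← Real.norm_eq_abs]
  exact norm_setIntegral_le_of_norm_le_const (volume_rectCompl_lt_top L U l)
    fun y hy => hhg _ (insertAt_mem_rect L U ht hy)

theorem marginalMean_lt_of_unique_min {h : (Fin d → ℝ) → ℝ} {xstar : Fin d → ℝ}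
    (hxstar : xstar ∈ rect L U) (hmin : ∀ x ∈ rect L U, h xstar ≤ h x)
    (huniq : ∀ x ∈ rect L U, x ≠ xstar → h xstar < h x)
    (hFOD : {x | x ∈ rect L U ∧ ∀ y ∈ rect L U, h x ≤ h y} =
      {x | x ∈ rect L U ∧ ∀ y ∈ rect L U,
        (∑ l, marginalMean L U h l (x l)) ≤ ∑ l, marginalMean L U h l (y l)})
    (l : Fin d) {t : ℝ} (ht : t ∈ Icc (L l) (U l)) (hne : t ≠ xstar l) :
    marginalMean L U h l (xstar l) < marginalMean L U h l t := by
  have hxsum : xstar ∈ {x | x ∈ rect L U ∧ ∀ y ∈ rect L U,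
      (∑ l, marginalMean L U h l (x l)) ≤ ∑ l, marginalMean L U h l (y l)} :=
    hFOD ▸ ⟨hxstar, hmin⟩
  refine lt_apply_of_unique_min_sum (m := marginalMean L U h) hxstar hxsum.2
    (fun y hy hymin => ?_) l ht hne
  have hyh : y ∈ {x | x ∈ rect L U ∧ ∀ z ∈ rect L U, h x ≤ h z} := hFOD ▸ ⟨hy, hymin⟩
  by_contra hyx
  exact (huniq y hy hyx).not_ge (hyh.2 xstar hxstar)

end MarginalMean

theorem stmt15_general (d : ℕ) (L U : Fin d → ℝ)
    (h : (Fin d → ℝ) → ℝ) (hcont : ContinuousOn h (rect L U))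
    (xstar : Fin d → ℝ) (hxstar : xstar ∈ rect L U)
    (hmin : ∀ x ∈ rect L U, h xstar ≤ h x)
    (huniq : ∀ x ∈ rect L U, x ≠ xstar → h xstar < h x)
    (hFOD : {x | x ∈ rect L U ∧ ∀ y ∈ rect L U, h x ≤ h y} =
      {x | x ∈ rect L U ∧ ∀ y ∈ rect L U,
        (∑ l, marginalMean L U h l (x l)) ≤ ∑ l, marginalMean L U h l (y l)})
    (φ : ℝ → ℝ) (hφc : Continuous φ)
    (g : ℕ → (Fin d → ℝ) → ℝ) (hgcont : ∀ n, ContinuousOn (g n) (rect L U))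
    (ε : ℕ → ℝ) (hgε : ∀ n, ∀ x ∈ rect L U, |h x - g n x| ≤ ε n)
    (hε : Filter.Tendsto ε Filter.atTop (nhds 0))
    (xhat : ℕ → Fin d → ℝ) (hxhatmem : ∀ n, xhat n ∈ rect L U)
    (hxhatmin : ∀ n, ∀ l, ∀ t ∈ Set.Icc (L l) (U l),
      marginalMean L U (g n) l (xhat n l) ≤ marginalMean L U (g n) l t) :
    Filter.Tendsto xhat Filter.atTop (nhds xstar) ∧
    Filter.Tendsto (fun n => h (xhat n)) Filter.atTop (nhds (h xstar)) ∧
    Filter.Tendsto (fun n => φ (h (xhat n))) Filter.atTop (nhds (φ (h xstar))) := by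
  have hcoord (l : Fin d) : Tendsto (fun n => xhat n l) atTop (𝓝 (xstar l)) :=
    isCompact_Icc.tendsto_of_isMinOn_of_abs_sub_le (continuousOn_marginalMean hcont l)
      (fun _ ht hne => marginalMean_lt_of_unique_min hxstar hmin huniq hFOD l ht hne)
      (hxstar l trivial)
      (fun n _ ht => abs_marginalMean_sub_le hcont (hgcont n) (hgε n) ht)
      (by simpa using hε.mul_const _) (fun n => hxhatmem n l trivial)
      (fun n => isMinOn_iff.2 (hxhatmin n l))
  have hx : Tendsto xhat atTop (𝓝 xstar) := tendsto_pi_nhds.2 hcoord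
  have hh : Tendsto (fun n => h (xhat n)) atTop (𝓝 (h xstar)) :=
    (hcont xstar hxstar).tendsto.comp (tendsto_nhdsWithin_iff.2 ⟨hx, .of_forall hxhatmem⟩)
  exact ⟨hx, hh, (hφc.tendsto _).comp hh⟩

/-- deterministic core of Theorem 4, consistency of BOMM: Let `h` be
continuous on `X = ∏ [L l, U l]` with unique minimizer `x*` satisfying the first-order
dominating condition, let `φ` be continuous and strictly increasing, `f = φ ∘ h`, and let
`g n` be continuous approximants of `h` with uniform error `ε n → 0` on `X`. If
`x̂ n ∈ X` has each coordinate `x̂ n l` minimizing the `l`-th marginal mean of `g n` over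
`[L l, U l]`, then `x̂ n → x*`, `h (x̂ n) → h x*` and `f (x̂ n) → f x*`. -/
theorem stmt15 (d : ℕ) (hd : 1 ≤ d) (L U : Fin d → ℝ) (hLU : ∀ l, L l < U l)
    (h : (Fin d → ℝ) → ℝ) (hcont : ContinuousOn h (rect L U))
    (xstar : Fin d → ℝ) (hxstar : xstar ∈ rect L U)
    (hmin : ∀ x ∈ rect L U, h xstar ≤ h x)
    (huniq : ∀ x ∈ rect L U, x ≠ xstar → h xstar < h x)
    (hFOD : {x | x ∈ rect L U ∧ ∀ y ∈ rect L U, h x ≤ h y} =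
      {x | x ∈ rect L U ∧ ∀ y ∈ rect L U,
        (∑ l, marginalMean L U h l (x l)) ≤ ∑ l, marginalMean L U h l (y l)})
    (φ : ℝ → ℝ) (hφc : Continuous φ) (hφm : StrictMono φ)
    (g : ℕ → (Fin d → ℝ) → ℝ) (hgcont : ∀ n, ContinuousOn (g n) (rect L U))
    (ε : ℕ → ℝ) (hgε : ∀ n, ∀ x ∈ rect L U, |h x - g n x| ≤ ε n)
    (hε : Filter.Tendsto ε Filter.atTop (nhds 0))
    (xhat : ℕ → Fin d → ℝ) (hxhatmem : ∀ n, xhat n ∈ rect L U)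
    (hxhatmin : ∀ n, ∀ l, ∀ t ∈ Set.Icc (L l) (U l),
      marginalMean L U (g n) l (xhat n l) ≤ marginalMean L U (g n) l t) :
    Filter.Tendsto xhat Filter.atTop (nhds xstar) ∧
    Filter.Tendsto (fun n => h (xhat n)) Filter.atTop (nhds (h xstar)) ∧
    Filter.Tendsto (fun n => φ (h (xhat n))) Filter.atTop (nhds (φ (h xstar))) :=
  stmt15_general d L U h hcont xstar hxstar hmin huniq hFOD φ hφc g hgcont ε hgε hε xhat hxhatmem
    hxhatmin
end
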